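/- arXiv:2011.06064 — 2 statements merged into one kernel-verified Lean document; each statement's English description precedes it below -/
import Mathlib

section
/- Let (Ω, d) be a metric space with Borel σ-algebra, let (P_θ)_{θ∈Θ} be a family of probability measures on Ω, let f : Ω → ℝ be measurable and integrable with respect to every P_θ, let f have a unique global minimum at x* ∈ Ω (i.e. f(x*) < f(y) for all y ≠ x*), let f be continuous at x*, and assume (P_θ)_{θ∈Θ} is f-concentrated at x*. If θ₀ ∈ Θ satisfies ∫_Ω f dP_{θ₀} ≤ ∫_Ω f dP_θ for all θ ∈ Θ, then ∫_Ω f dP_{θ₀} = f(x*) and P_{θ₀} is the Dirac measure at x*. -/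
/-!
Since `x*` minimizes `f`, every `∫ f dP_θ` is at least `f x*`. Conversely, by continuity `f`
stays below `c = f x* + ε / 2` on a small ball, and outside the ball
`f - c ≤ (1 + |c|) max |f| 1`, so concentration makes some `∫ f dP_θ` at most `f x* + ε`. Hence the minimizer satisfies
`∫ f dP_θ₀ = f x*`, so `f = f x*` almost surely under `P_θ₀`, and uniqueness of the minimum
puts all the mass of `P_θ₀` on `x*`.
-/

open MeasureTheory Filter

def IsConcentratedAt {Ω Θ : Type*} [MetricSpace Ω] [MeasurableSpace Ω]
    (f : Ω → ℝ) (P : Θ → Measure Ω) (x : Ω) : Prop :=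
  ∀ ε > (0 : ℝ), ∀ δ > (0 : ℝ), ∃ θ, (∫ y in (Metric.ball x δ)ᶜ, max |f y| 1 ∂(P θ)) < ε

section Integral

variable {α : Type*} [MeasurableSpace α] {μ : Measure α} [IsProbabilityMeasure μ] {f : α → ℝ}

theorem sub_le_mul_max_abs_one (a c : ℝ) : a - c ≤ (1 + |c|) * max |a| 1 := by
  have := le_max_left |a| 1
  have := le_max_right |a| 1
  nlinarith [le_abs_self a, neg_abs_le c, abs_nonneg c]

theorem integral_le_add_mul_setIntegral_compl (hf : Integrable f μ) {s : Set α}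
    (hs : MeasurableSet s) {c : ℝ} (hfs : ∀ y ∈ s, f y ≤ c) :
    ∫ y, f y ∂μ ≤ c + (1 + |c|) * ∫ y in sᶜ, max |f y| 1 ∂μ := by
  have hsub : Integrable (fun y => f y - c) μ := hf.sub (integrable_const c)
  have hmax : Integrable (fun y => (1 + |c|) * max |f y| 1) μ :=
    (hf.abs.sup (integrable_const 1)).const_mul _
  calc ∫ y, f y ∂μ = c + ∫ y, (f y - c) ∂μ := by
        rw [integral_sub hf (integrable_const c)]; simp
    _ = c + ((∫ y in s, (f y - c) ∂μ) + ∫ y in sᶜ, (f y - c) ∂μ) := by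
        rw [integral_add_compl hs hsub]
    _ ≤ c + (0 + ∫ y in sᶜ, (1 + |c|) * max |f y| 1 ∂μ) := by
        gcongr c + (?_ + ?_)
        · exact setIntegral_nonpos hs fun y hy => sub_nonpos.mpr (hfs y hy)
        · exact setIntegral_mono_on hsub.integrableOn hmax.integrableOn hs.compl
            fun y _ => sub_le_mul_max_abs_one (f y) c
    _ = c + (1 + |c|) * ∫ y in sᶜ, max |f y| 1 ∂μ := by
        rw [integral_const_mul, zero_add]

theorem const_le_integral_of_forall_le (hf : Integrable f μ) {c : ℝ} (hc : ∀ y, c ≤ f y) :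
    c ≤ ∫ y, f y ∂μ := by
  simpa using integral_mono (integrable_const c) hf hc

theorem ae_eq_const_of_integral_le_of_forall_le (hf : Integrable f μ) {c : ℝ}
    (hc : ∀ y, c ≤ f y) (hint : ∫ y, f y ∂μ ≤ c) : ∀ᵐ y ∂μ, f y = c := by
  have hzero : ∫ y, (f y - c) ∂μ = 0 := by
    rw [integral_sub hf (integrable_const c)]
    simp [le_antisymm hint (const_le_integral_of_forall_le hf hc)]
  filter_upwards [(integral_eq_zero_iff_of_nonneg (fun y => sub_nonneg.mpr (hc y))
    (hf.sub (integrable_const c))).mp hzero] with y hy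
  exact sub_eq_zero.mp hy

end Integral

theorem MeasureTheory.Measure.eq_dirac_of_ae_eq {α : Type*} [MeasurableSpace α]
    [MeasurableSingletonClass α] {μ : Measure α} [IsProbabilityMeasure μ] {x : α}
    (h : ∀ᵐ y ∂μ, y = x) : μ = Measure.dirac x := by
  have hx : μ {x} = 1 := by
    rw [← prob_compl_eq_zero_iff (measurableSet_singleton x)]
    exact ae_iff.mp h
  rw [← Measure.restrict_eq_self_of_ae_mem (s := {x}) h, Measure.restrict_singleton, hx, one_smul]

theorem IsConcentratedAt.exists_integral_le_add {Ω Θ : Type*} [MetricSpace Ω]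
    [MeasurableSpace Ω] [BorelSpace Ω] {P : Θ → Measure Ω} [∀ θ, IsProbabilityMeasure (P θ)]
    {f : Ω → ℝ} {x : Ω} (hconc : IsConcentratedAt f P x) (hf : ∀ θ, Integrable f (P θ))
    (hcont : ContinuousAt f x) {ε : ℝ} (hε : 0 < ε) : ∃ θ, ∫ y, f y ∂(P θ) ≤ f x + ε := by
  set c := f x + ε / 2
  obtain ⟨δ, hδ, hball⟩ : ∃ δ > 0, ∀ y ∈ Metric.ball x δ, f y < c :=
    Metric.eventually_nhds_iff_ball.mp (hcont.eventually (Iio_mem_nhds (lt_add_of_pos_right _ (half_pos hε))))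
  obtain ⟨θ, hθ⟩ := hconc (ε / 2 / (1 + |c|)) (by positivity) δ hδ
  refine ⟨θ, (integral_le_add_mul_setIntegral_compl (hf θ) Metric.isOpen_ball.measurableSet
    fun y hy => (hball y hy).le).trans ?_⟩
  calc c + (1 + |c|) * ∫ y in (Metric.ball x δ)ᶜ, max |f y| 1 ∂(P θ)
      ≤ c + (1 + |c|) * (ε / 2 / (1 + |c|)) := by gcongr
    _ = f x + ε := by field_simp; ring

theorem minimizer_is_dirac_general {Ω : Type*} [MetricSpace Ω] [MeasurableSpace Ω] [BorelSpace Ω]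
    {Θ : Type*} (P : Θ → Measure Ω) (hprob : ∀ θ, IsProbabilityMeasure (P θ))
    (f : Ω → ℝ) (hint : ∀ θ, Integrable f (P θ)) (xs : Ω)
    (hmin : ∀ y, y ≠ xs → f xs < f y)
    (hcont : ContinuousAt f xs)
    (hconc : ∀ ε > (0 : ℝ), ∀ δ > (0 : ℝ), ∃ θ,
      (∫ y in (Metric.ball xs δ)ᶜ, max |f y| 1 ∂(P θ)) < ε)
    (θ₀ : Θ) (hθ₀ : ∀ θ, (∫ y, f y ∂(P θ₀)) ≤ ∫ y, f y ∂(P θ)) :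
    (∫ y, f y ∂(P θ₀)) = f xs ∧ P θ₀ = Measure.dirac xs := by
  have hle : ∀ y, f xs ≤ f y := fun y =>
    (eq_or_ne y xs).elim (fun h => h ▸ le_rfl) fun h => (hmin y h).le
  have hupper : ∫ y, f y ∂(P θ₀) ≤ f xs := le_of_forall_pos_le_add fun ε hε => by
    obtain ⟨θ, hθ⟩ := IsConcentratedAt.exists_integral_le_add hconc hint hcont hε
    exact (hθ₀ θ).trans hθ
  refine ⟨hupper.antisymm (const_le_integral_of_forall_le (hint θ₀) hle),
    Measure.eq_dirac_of_ae_eq ?_⟩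
  filter_upwards [ae_eq_const_of_integral_le_of_forall_le (hint θ₀) hle hupper] with y hy
  by_contra hne
  exact (hmin y hne).ne' hy

/-- Under the consistency assumptions, a minimizer `θ₀` of the relaxation
attains the value `f(x*)` and `P_{θ₀}` is the Dirac measure at the minimum `x*`. -/
theorem minimizer_is_dirac {Ω : Type*} [MetricSpace Ω] [MeasurableSpace Ω] [BorelSpace Ω]
    {Θ : Type*} (P : Θ → Measure Ω) (hprob : ∀ θ, IsProbabilityMeasure (P θ))
    (f : Ω → ℝ) (hmeas : Measurable f) (hint : ∀ θ, Integrable f (P θ)) (xs : Ω)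
    (hmin : ∀ y, y ≠ xs → f xs < f y)
    (hcont : ContinuousAt f xs)
    (hconc : ∀ ε > (0 : ℝ), ∀ δ > (0 : ℝ), ∃ θ,
      (∫ y in (Metric.ball xs δ)ᶜ, max |f y| 1 ∂(P θ)) < ε)
    (θ₀ : Θ) (hθ₀ : ∀ θ, (∫ y, f y ∂(P θ₀)) ≤ ∫ y, f y ∂(P θ)) :
    (∫ y, f y ∂(P θ₀)) = f xs ∧ P θ₀ = Measure.dirac xs :=
  minimizer_is_dirac_general P hprob f hint xs hmin hcont hconc θ₀ hθ₀
end

section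
/- (Deterministic cosine disturbance) Let f = r + g : ℝⁿ → ℝ where r is m-strongly convex and polynomially bounded (|r(x)| ≤ C(1+‖x‖)^p for some C ≥ 0, p ∈ ℕ), and g(x) = Σ_{j=1}^∞ a_j cos(⟨ξ_j, x⟩ + ψ_j) with Σ_j |a_j| < ∞ and with ‖ξ_j‖ ≥ ε for all j for some ε > 0. Let k : ℝⁿ → ℝ be a nonnegative Schwartz function with ∫_{ℝⁿ} k dλ = 1. Then for every m* < m there exists σ* > 0 such that for all σ > σ*, the map θ ∈ ℝⁿ ↦ ∫_{ℝⁿ} f(x) σ^{-n} k(σ^{-1}(x − θ)) λ(dx) is m*-strongly convex. -/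
/-!
After the substitution `x = θ + σ • y`, the relaxation at `θ` is the average of `f (θ + σ • y)`
against the probability density `k`. Averaging the strong-convexity inequality of `r` shows that
this smoothing of `r` is still `m`-strongly convex. Smoothing the wave `cos (⟪ξ, x⟫ + ψ)` gives
the wave of the same frequency with complex amplitude `χ (σ • ξ)`, where `χ` is the characteristic
function of `k`; such a wave is `-(‖χ (σ • ξ)‖ * ‖ξ‖ ^ 2)`-strongly convex. Since `χ` is a rescaled
Fourier transform of a Schwartz function, `‖u‖ ^ 2 * ‖χ u‖ ≤ D` for some `D`, so the smoothed
cosine series loses at most `D * ∑ |a j| / σ ^ 2` of strong convexity, less than `m - m*` once `σ`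
is large.
-/

open MeasureTheory Set Filter Complex Module FourierTransform
open scoped RealInnerProductSpace

section Convexity

variable {V W : Type*} [NormedAddCommGroup V] [NormedSpace ℝ V] [NormedAddCommGroup W]
  [NormedSpace ℝ W]

theorem strongConvexOn_univ_iff {f : V → ℝ} {m : ℝ} :
    StrongConvexOn univ m f ↔ ∀ v w : V, ∀ t ∈ Icc (0 : ℝ) 1,
      f (t • v + (1 - t) • w)
        ≤ t * f v + (1 - t) * f w - 1 / 2 * m * t * (1 - t) * ‖v - w‖ ^ 2 := by
  constructor
  · intro hf v w t ht
    have := hf.2 (mem_univ v) (mem_univ w) ht.1 (sub_nonneg.2 ht.2) (add_sub_cancel t 1)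
    simp only [smul_eq_mul] at this
    linarith
  · refine fun hf => ⟨convex_univ, fun v _ w _ s u hs hu hsu => ?_⟩
    obtain rfl : u = 1 - s := by linarith
    have := hf v w s ⟨hs, by linarith⟩
    simp only [smul_eq_mul]
    linarith

theorem StrongConvexOn.add {s : Set V} {m m' : ℝ} {f g : V → ℝ} (hf : StrongConvexOn s m f)
    (hg : StrongConvexOn s m' g) : StrongConvexOn s (m + m') (f + g) := by
  unfold StrongConvexOn at *
  convert hf.add hg using 2 with r
  simp only [Pi.add_apply]
  ring

theorem StrongConvexOn.tsum {ι : Type*} {s : Set V} {f : ι → V → ℝ} {m : ι → ℝ}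
    (hs : Convex ℝ s) (hf : ∀ i, StrongConvexOn s (m i) (f i)) (hm : Summable m)
    (hsum : ∀ x ∈ s, Summable fun i => f i x) :
    StrongConvexOn s (∑' i, m i) fun x => ∑' i, f i x := by
  refine ⟨hs, fun x hx y hy a b ha hb hab => ?_⟩
  have hcomb : Summable fun i => a * f i x + b * f i y :=
    ((hsum x hx).mul_left a).add ((hsum y hy).mul_left b)
  have hdefect : Summable fun i => a * b * (m i / 2 * ‖x - y‖ ^ 2) :=
    ((hm.div_const 2).mul_right _).mul_left _
  simp only [smul_eq_mul] at hf ⊢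
  calc ∑' i, f i (a • x + b • y)
      ≤ ∑' i, (a * f i x + b * f i y - a * b * (m i / 2 * ‖x - y‖ ^ 2)) :=
        Summable.tsum_le_tsum (fun i => (hf i).2 hx hy ha hb hab) (hsum _ (hs hx hy ha hb hab))
          (hcomb.sub hdefect)
    _ = a * ∑' i, f i x + b * ∑' i, f i y - a * b * ((∑' i, m i) / 2 * ‖x - y‖ ^ 2) := by
        rw [hcomb.tsum_sub hdefect, Summable.tsum_add ((hsum x hx).mul_left a)
          ((hsum y hy).mul_left b), tsum_mul_left, tsum_mul_left, tsum_mul_left, tsum_mul_right,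
          tsum_div_const]

theorem StrongConvexOn.comp_continuousLinearMap {h : W → ℝ} {c : ℝ}
    (hh : StrongConvexOn univ (-c) h) (hc : 0 ≤ c) (L : V →L[ℝ] W) :
    StrongConvexOn univ (-(c * ‖L‖ ^ 2)) (h ∘ L) := by
  refine ⟨convex_univ, fun x _ y _ a b ha hb hab => ?_⟩
  have hL : ‖L x - L y‖ ^ 2 ≤ ‖L‖ ^ 2 * ‖x - y‖ ^ 2 := by
    rw [← map_sub, ← mul_pow]
    exact pow_le_pow_left₀ (norm_nonneg _) (L.le_opNorm _) 2
  have := hh.2 (mem_univ (L x)) (mem_univ (L y)) ha hb hab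
  simp only [Function.comp_apply, map_add, map_smul, smul_eq_mul] at this ⊢
  nlinarith [mul_nonneg (mul_nonneg (mul_nonneg ha hb) hc) (sub_nonneg.2 hL)]

theorem StrongConvexOn.integral_comp_add_mul {α : Type*} [MeasurableSpace α] {μ : Measure α}
    {f : V → ℝ} {m : ℝ} (hf : StrongConvexOn univ m f) {u : α → V} {w : α → ℝ}
    (hw : ∀ y, 0 ≤ w y) (hw1 : ∫ y, w y ∂μ = 1)
    (hint : ∀ θ, Integrable (fun y => f (θ + u y) * w y) μ) :
    StrongConvexOn univ m fun θ => ∫ y, f (θ + u y) * w y ∂μ := by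
  refine ⟨convex_univ, fun x _ z _ a b ha hb hab => ?_⟩
  have hpt (y : α) : f (a • x + b • z + u y) * w y
      ≤ a * (f (x + u y) * w y) + b * (f (z + u y) * w y)
        - a * b * (m / 2 * ‖x - z‖ ^ 2) * w y := by
    have hshift : a • x + b • z + u y = a • (x + u y) + b • (z + u y) := by
      rw [smul_add, smul_add, add_add_add_comm, ← add_smul, hab, one_smul]
    have := hf.2 (mem_univ (x + u y)) (mem_univ (z + u y)) ha hb hab
    rw [← hshift, add_sub_add_right_eq_sub, smul_eq_mul, smul_eq_mul] at this
    nlinarith [hw y]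
  have hwi : Integrable w μ := Integrable.of_integral_ne_zero (by simp [hw1])
  have hcomb : Integrable (fun y => a * (f (x + u y) * w y) + b * (f (z + u y) * w y)) μ :=
    ((hint x).const_mul a).add ((hint z).const_mul b)
  calc ∫ y, f (a • x + b • z + u y) * w y ∂μ
      ≤ ∫ y, (a * (f (x + u y) * w y) + b * (f (z + u y) * w y)
        - a * b * (m / 2 * ‖x - z‖ ^ 2) * w y) ∂μ :=
        integral_mono (hint _) (hcomb.sub (hwi.const_mul _)) hpt
    _ = _ := by
        rw [integral_sub hcomb (hwi.const_mul _),
          integral_add ((hint x).const_mul a) ((hint z).const_mul b),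
          integral_const_mul, integral_const_mul, integral_const_mul, hw1, smul_eq_mul,
          smul_eq_mul, mul_one]

end Convexity

theorem strongConvexOn_mul_cos {c : ℝ} (hc : 0 ≤ c) (φ : ℝ) :
    StrongConvexOn univ (-c) fun s : ℝ => c * Real.cos (s + φ) := by
  rw [strongConvexOn_iff_convex]
  have hd (s : ℝ) : HasDerivAt (fun s => c * Real.cos (s + φ) - -c / 2 * ‖s‖ ^ 2)
      (-c * Real.sin (s + φ) + c * s) s := by
    simp only [Real.norm_eq_abs, sq_abs]
    exact ((((Real.hasDerivAt_cos _).comp s ((hasDerivAt_id s).add_const φ)).const_mul c).sub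
      ((hasDerivAt_pow 2 s).const_mul (-c / 2))).congr_deriv (by simp; ring)
  have hd2 (s : ℝ) : HasDerivAt (fun s => -c * Real.sin (s + φ) + c * s)
      (-c * Real.cos (s + φ) + c) s :=
    ((((Real.hasDerivAt_sin _).comp s ((hasDerivAt_id s).add_const φ)).const_mul (-c)).add
      ((hasDerivAt_id s).const_mul c)).congr_deriv (by simp)
  refine convexOn_of_hasDerivWithinAt2_nonneg convex_univ (by fun_prop)
    (fun s _ => (hd s).hasDerivWithinAt) (fun s _ => (hd2 s).hasDerivWithinAt) fun s _ => ?_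
  nlinarith [Real.cos_le_one (s + φ)]

section InnerProduct

variable {V : Type*} [NormedAddCommGroup V] [InnerProductSpace ℝ V]

theorem StrongConvexOn.continuous [FiniteDimensional ℝ V] {f : V → ℝ} {m : ℝ}
    (hf : StrongConvexOn univ m f) : Continuous f := by
  have h := continuousOn_univ.mp ((strongConvexOn_iff_convex.mp hf).continuousOn isOpen_univ)
  convert h.add ((continuous_norm.pow 2).const_mul (m / 2)) using 1
  ext x
  simp

theorem strongConvexOn_re_mul_exp_inner (z : ℂ) (ξ : V) (ψ : ℝ) :
    StrongConvexOn univ (-(‖z‖ * ‖ξ‖ ^ 2)) fun θ => (z * cexp (↑(⟪ξ, θ⟫ + ψ) * I)).re := by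
  have h := (strongConvexOn_mul_cos (norm_nonneg z) (ψ + arg z)).comp_continuousLinearMap
    (norm_nonneg z) (innerSL ℝ ξ)
  rw [innerSL_apply_norm] at h
  convert h using 2 with θ
  conv_lhs => rw [← norm_mul_exp_arg_mul_I z]
  rw [mul_assoc, ← Complex.exp_add, ← add_mul, ← ofReal_add, re_ofReal_mul, exp_ofReal_mul_I_re]
  simp only [Function.comp_apply, innerSL_apply_apply]
  ring_nf

noncomputable def cosineSeries (a : ℕ → ℝ) (ξ : ℕ → V) (ψ : ℕ → ℝ) (x : V) : ℝ :=
  ∑' j, a j * Real.cos (⟪ξ j, x⟫ + ψ j)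

theorem continuous_cosineSeries {a : ℕ → ℝ} (ha : Summable fun j => |a j|) (ξ : ℕ → V)
    (ψ : ℕ → ℝ) : Continuous (cosineSeries a ξ ψ) :=
  continuous_tsum (fun j => by fun_prop) ha fun j x => by
    rw [norm_mul, Real.norm_eq_abs, Real.norm_eq_abs]
    exact mul_le_of_le_one_right (abs_nonneg _) (Real.abs_cos_le_one _)

theorem abs_cosineSeries_le {a : ℕ → ℝ} (ha : Summable fun j => |a j|) (ξ : ℕ → V)
    (ψ : ℕ → ℝ) (x : V) : |cosineSeries a ξ ψ x| ≤ ∑' j, |a j| := by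
  have hle (j : ℕ) : ‖a j * Real.cos (⟪ξ j, x⟫ + ψ j)‖ ≤ |a j| := by
    rw [norm_mul, Real.norm_eq_abs, Real.norm_eq_abs]
    exact mul_le_of_le_one_right (abs_nonneg _) (Real.abs_cos_le_one _)
  rw [← Real.norm_eq_abs]
  exact tsum_of_norm_bounded ha.hasSum hle

end InnerProduct

theorem integral_tsum_mul_of_abs_le_one {α ι : Type*} [MeasurableSpace α] [Countable ι]
    {μ : Measure α} {a : ι → ℝ} (ha : Summable fun j => |a j|) {c : ι → α → ℝ}
    (hc : ∀ j, AEStronglyMeasurable (c j) μ) (hc1 : ∀ j y, |c j y| ≤ 1) {k : α → ℝ}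
    (hk : Integrable k μ) :
    ∫ y, (∑' j, a j * c j y) * k y ∂μ = ∑' j, a j * ∫ y, c j y * k y ∂μ := by
  have hint (j : ι) : Integrable (fun y => c j y * k y) μ :=
    hk.bdd_mul (hc j) (Eventually.of_forall fun y => (Real.norm_eq_abs _).trans_le (hc1 j y))
  have hnorm (j : ι) : ∫ y, ‖a j * (c j y * k y)‖ ∂μ ≤ |a j| * ∫ y, ‖k y‖ ∂μ := by
    rw [← integral_const_mul]
    refine integral_mono ((hint j).const_mul _).norm (hk.norm.const_mul _) fun y => ?_
    simp only [norm_mul, Real.norm_eq_abs]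
    gcongr
    exact mul_le_of_le_one_left (abs_nonneg _) (hc1 j y)
  simp_rw [← tsum_mul_right, mul_assoc]
  rw [← integral_tsum_of_summable_integral_norm (fun j => (hint j).const_mul (a j))
    (Summable.of_nonneg_of_le (fun j => integral_nonneg fun y => norm_nonneg _) hnorm
      (ha.mul_right _))]
  simp_rw [integral_const_mul]

theorem SchwartzMap.integrable_comp_add_smul_mul {D : Type*} [NormedAddCommGroup D]
    [NormedSpace ℝ D] [MeasurableSpace D] [BorelSpace D] [SecondCountableTopology D]
    {μ : Measure D} [μ.HasTemperateGrowth] (k : SchwartzMap D ℝ) {f : D → ℝ} (hf : Continuous f)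
    {C : ℝ} {p : ℕ} (hb : ∀ x, |f x| ≤ C * (1 + ‖x‖) ^ p) (θ : D) (σ : ℝ) :
    Integrable (fun y => f (θ + σ • y) * k y) μ := by
  have hC : 0 ≤ C := by simpa using (abs_nonneg _).trans (hb 0)
  set K := C * (1 + ‖θ‖ + |σ|) ^ p * 2 ^ (p - 1)
  refine Integrable.mono' ((k.integrable.norm.add (k.integrable_pow_mul μ p)).const_mul K)
    ((hf.comp (by fun_prop)).mul k.continuous).aestronglyMeasurable
    (Eventually.of_forall fun y => ?_)
  have hshift : 1 + ‖θ + σ • y‖ ≤ (1 + ‖θ‖ + |σ|) * (1 + ‖y‖) := by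
    have := norm_add_le θ (σ • y)
    rw [norm_smul, Real.norm_eq_abs] at this
    nlinarith [norm_nonneg θ, norm_nonneg y, abs_nonneg σ]
  have hpow : (1 + ‖y‖) ^ p ≤ 2 ^ (p - 1) * (1 + ‖y‖ ^ p) := by
    simpa using add_pow_le zero_le_one (norm_nonneg y) p
  calc ‖f (θ + σ • y) * k y‖
      ≤ C * ((1 + ‖θ‖ + |σ|) * (1 + ‖y‖)) ^ p * ‖k y‖ := by
        rw [norm_mul, Real.norm_eq_abs]
        gcongr
        exact (hb _).trans (by gcongr)
    _ ≤ K * (‖k y‖ + ‖y‖ ^ p * ‖k y‖) := by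
        rw [mul_pow]
        have := mul_le_mul_of_nonneg_left hpow
          (by positivity : 0 ≤ C * (1 + ‖θ‖ + |σ|) ^ p * ‖k y‖)
        simp only [K]
        nlinarith

theorem integral_mul_inv_pow_smul_sub {V : Type*} [NormedAddCommGroup V] [NormedSpace ℝ V]
    [FiniteDimensional ℝ V] [MeasurableSpace V] [BorelSpace V] (μ : Measure V)
    [μ.IsAddHaarMeasure] (f k : V → ℝ) {σ : ℝ} (hσ : 0 < σ) (θ : V) :
    ∫ x, f x * ((σ ^ finrank ℝ V)⁻¹ * k (σ⁻¹ • (x - θ))) ∂μ = ∫ y, f (θ + σ • y) * k y ∂μ := by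
  rw [← integral_add_left_eq_self _ θ]
  simp_rw [add_sub_cancel_left]
  have (x : V) : f (θ + x) * ((σ ^ finrank ℝ V)⁻¹ * k (σ⁻¹ • x))
      = (σ ^ finrank ℝ V)⁻¹ • (f (θ + σ • σ⁻¹ • x) * k (σ⁻¹ • x)) := by
    rw [smul_inv_smul₀ hσ.ne', smul_eq_mul]
    ring
  simp_rw [this]
  rw [integral_smul, Measure.integral_comp_inv_smul_of_nonneg μ (fun y => f (θ + σ • y) * k y)
    hσ.le, smul_smul, inv_mul_cancel₀ (by positivity), one_smul]

section Smoothing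

variable {V : Type*} [NormedAddCommGroup V] [InnerProductSpace ℝ V] [FiniteDimensional ℝ V]
  [MeasurableSpace V] [BorelSpace V]

noncomputable def smoothing (f k : V → ℝ) (σ : ℝ) (θ : V) : ℝ := ∫ y, f (θ + σ • y) * k y

theorem smoothing_add {f g k : V → ℝ} {σ : ℝ}
    (hf : ∀ θ, Integrable fun y => f (θ + σ • y) * k y)
    (hg : ∀ θ, Integrable fun y => g (θ + σ • y) * k y) :
    smoothing (f + g) k σ = smoothing f k σ + smoothing g k σ := by
  ext θ
  simp only [smoothing, Pi.add_apply, add_mul]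
  exact integral_add (hf θ) (hg θ)

theorem StrongConvexOn.smoothing {f : V → ℝ} {m : ℝ} (hf : StrongConvexOn univ m f) {C : ℝ}
    {p : ℕ} (hb : ∀ x, |f x| ≤ C * (1 + ‖x‖) ^ p) (k : SchwartzMap V ℝ) (hk : ∀ y, 0 ≤ k y)
    (hk1 : ∫ y, k y = 1) (σ : ℝ) : StrongConvexOn univ m (smoothing f k σ) :=
  hf.integral_comp_add_mul hk hk1 fun θ => k.integrable_comp_add_smul_mul hf.continuous hb θ σ

noncomputable def charFunDensity (k : V → ℝ) (t : V) : ℂ := ∫ x, cexp (⟪x, t⟫ * I) * k x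

theorem integral_cos_inner_add_smul_mul {k : V → ℝ} (hk : Integrable k) (ξ θ : V) (σ ψ : ℝ) :
    ∫ y, Real.cos (⟪ξ, θ + σ • y⟫ + ψ) * k y
      = (charFunDensity k (σ • ξ) * cexp (↑(⟪ξ, θ⟫ + ψ) * I)).re := by
  have hint : Integrable fun y : V => cexp (⟪y, σ • ξ⟫ * I) * k y :=
    hk.ofReal.bdd_mul (c := 1) (by fun_prop)
      (Eventually.of_forall fun y => by rw [norm_exp_ofReal_mul_I])
  have hre := integral_re (hint.mul_const (cexp (↑(⟪ξ, θ⟫ + ψ) * I)))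
  rw [RCLike.re_to_complex] at hre
  rw [charFunDensity, ← integral_mul_const, ← hre]
  congr 1 with y
  rw [mul_right_comm, ← Complex.exp_add, ← add_mul, ← ofReal_add, RCLike.re_to_complex,
    re_mul_ofReal, exp_ofReal_mul_I_re, inner_add_right, real_inner_smul_right,
    real_inner_smul_right, real_inner_comm ξ y]
  ring_nf

theorem SchwartzMap.exists_pow_mul_norm_charFunDensity_le (k : SchwartzMap V ℝ) (N : ℕ) :
    ∃ D, ∀ t : V, ‖t‖ ^ N * ‖charFunDensity k t‖ ≤ D := by
  set K : SchwartzMap V ℂ := SchwartzMap.postcompCLM (𝕜 := ℝ) ofRealCLM k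
  have hK (t : V) : charFunDensity k t = 𝓕⁻ K ((2 * Real.pi)⁻¹ • t) := by
    rw [SchwartzMap.fourierInv_coe, Real.fourierInv_eq, charFunDensity]
    congr 1 with x
    simp only [K, SchwartzMap.postcompCLM_apply, ofRealCLM_apply, Circle.smul_def,
      Real.fourierChar_apply, real_inner_smul_right, smul_eq_mul]
    congr 3
    field_simp
  refine ⟨(2 * Real.pi) ^ N * SchwartzMap.seminorm ℝ N 0 (𝓕⁻ K), fun t => ?_⟩
  have h := SchwartzMap.norm_pow_mul_le_seminorm ℝ (𝓕⁻ K) N ((2 * Real.pi)⁻¹ • t)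
  rw [norm_smul, mul_pow, Real.norm_of_nonneg (by positivity), inv_pow] at h
  calc ‖t‖ ^ N * ‖charFunDensity k t‖
      = (2 * Real.pi) ^ N
          * (((2 * Real.pi) ^ N)⁻¹ * ‖t‖ ^ N * ‖𝓕⁻ K ((2 * Real.pi)⁻¹ • t)‖) := by
        rw [hK]
        field_simp
    _ ≤ _ := by gcongr

theorem strongConvexOn_smoothing_cosineSeries {k : V → ℝ} (hk : Integrable k) {a : ℕ → ℝ}
    (ha : Summable fun j => |a j|) (ξ : ℕ → V) (ψ : ℕ → ℝ) {σ B : ℝ}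
    (hB : ∀ j, ‖ξ j‖ ^ 2 * ‖charFunDensity k (σ • ξ j)‖ ≤ B) :
    StrongConvexOn univ (-(B * ∑' j, |a j|)) (smoothing (cosineSeries a ξ ψ) k σ) := by
  have hterm (j : ℕ) : StrongConvexOn univ (-(B * |a j|))
      fun θ => a j * ∫ y, Real.cos (⟪ξ j, θ + σ • y⟫ + ψ j) * k y := by
    simp_rw [integral_cos_inner_add_smul_mul hk, ← re_ofReal_mul, ← mul_assoc]
    refine (strongConvexOn_re_mul_exp_inner _ (ξ j) (ψ j)).mono ?_
    rw [norm_mul, norm_real, Real.norm_eq_abs]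
    nlinarith [hB j, abs_nonneg (a j)]
  have hbound (j : ℕ) (θ : V) :
      ‖a j * ∫ y, Real.cos (⟪ξ j, θ + σ • y⟫ + ψ j) * k y‖ ≤ |a j| * ∫ y, ‖k y‖ := by
    rw [norm_mul, Real.norm_eq_abs]
    gcongr
    refine norm_integral_le_of_norm_le hk.norm (Eventually.of_forall fun y => ?_)
    rw [norm_mul]
    exact mul_le_of_le_one_left (norm_nonneg _) (Real.abs_cos_le_one _)
  have h := StrongConvexOn.tsum convex_univ hterm (ha.mul_left B).neg
    fun θ _ => Summable.of_norm_bounded (ha.mul_right _) (hbound · θ)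
  rw [tsum_neg, tsum_mul_left] at h
  convert h using 2 with θ
  exact integral_tsum_mul_of_abs_le_one ha (fun j => by fun_prop)
    (fun j y => Real.abs_cos_le_one _) hk

theorem strongConvexOn_smoothing_add_cosineSeries {r : V → ℝ} {m : ℝ}
    (hr : StrongConvexOn univ m r) {C : ℝ} {p : ℕ} (hb : ∀ x, |r x| ≤ C * (1 + ‖x‖) ^ p)
    (k : SchwartzMap V ℝ) (hk : ∀ y, 0 ≤ k y) (hk1 : ∫ y, k y = 1) {a : ℕ → ℝ}
    (ha : Summable fun j => |a j|) (ξ : ℕ → V) (ψ : ℕ → ℝ) {σ B : ℝ}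
    (hB : ∀ j, ‖ξ j‖ ^ 2 * ‖charFunDensity k (σ • ξ j)‖ ≤ B) :
    StrongConvexOn univ (m + -(B * ∑' j, |a j|)) (smoothing (r + cosineSeries a ξ ψ) k σ) := by
  rw [smoothing_add (fun θ => k.integrable_comp_add_smul_mul hr.continuous hb θ σ)
    (fun θ => k.integrable_comp_add_smul_mul (continuous_cosineSeries ha ξ ψ) (p := 0)
      (by simpa using abs_cosineSeries_le ha ξ ψ) θ σ)]
  exact (hr.smoothing hb k hk hk1 σ).add
    (strongConvexOn_smoothing_cosineSeries k.integrable ha ξ ψ hB)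

end Smoothing

theorem deterministic_cosine_disturbance_general (n : ℕ)
    (r : EuclideanSpace ℝ (Fin n) → ℝ)
    (m : ℝ)
    (hconv : ∀ v w : EuclideanSpace ℝ (Fin n), ∀ t ∈ Set.Icc (0 : ℝ) 1,
      r (t • v + (1 - t) • w)
        ≤ t * r v + (1 - t) * r w - 1 / 2 * m * t * (1 - t) * ‖v - w‖ ^ 2)
    (C : ℝ) (p : ℕ) (hrbound : ∀ x, |r x| ≤ C * (1 + ‖x‖) ^ p)
    (a : ℕ → ℝ) (ha : Summable fun j => |a j|)
    (ξ : ℕ → EuclideanSpace ℝ (Fin n)) (ψ : ℕ → ℝ)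
    (k : SchwartzMap (EuclideanSpace ℝ (Fin n)) ℝ)
    (hknn : ∀ x, 0 ≤ k x) (hk1 : ∫ x, k x = 1)
    (mstar : ℝ) (hmstar : mstar < m) :
    ∃ σstar > (0 : ℝ), ∀ σ > σstar,
      ∀ v w : EuclideanSpace ℝ (Fin n), ∀ t ∈ Set.Icc (0 : ℝ) 1,
        (∫ x, (r x + ∑' j, a j * Real.cos (⟪ξ j, x⟫ + ψ j)) *
            ((σ ^ n)⁻¹ * k (σ⁻¹ • (x - (t • v + (1 - t) • w)))))
          ≤ t * (∫ x, (r x + ∑' j, a j * Real.cos (⟪ξ j, x⟫ + ψ j)) *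
                ((σ ^ n)⁻¹ * k (σ⁻¹ • (x - v))))
            + (1 - t) * (∫ x, (r x + ∑' j, a j * Real.cos (⟪ξ j, x⟫ + ψ j)) *
                ((σ ^ n)⁻¹ * k (σ⁻¹ • (x - w))))
            - 1 / 2 * mstar * t * (1 - t) * ‖v - w‖ ^ 2 := by
  have hr : StrongConvexOn univ m r := strongConvexOn_univ_iff.mpr hconv
  obtain ⟨D, hD⟩ := k.exists_pow_mul_norm_charFunDensity_le 2
  obtain ⟨σ₀, hσ₀⟩ := eventually_atTop.mp <|
    ((tendsto_const_nhds (x := D * ∑' j, |a j|)).div_atTop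
      (tendsto_pow_atTop two_ne_zero)).eventually (ge_mem_nhds (sub_pos.2 hmstar))
  refine ⟨max σ₀ 1, by positivity, fun σ hσ v w t ht => ?_⟩
  have hσ0 : 0 < σ := zero_lt_one.trans ((le_max_right _ _).trans_lt hσ)
  have hB (j : ℕ) : ‖ξ j‖ ^ 2 * ‖charFunDensity k (σ • ξ j)‖ ≤ D / σ ^ 2 := by
    have := hD (σ • ξ j)
    rw [norm_smul, mul_pow, Real.norm_of_nonneg hσ0.le] at this
    rw [le_div_iff₀ (by positivity)]
    linarith
  have hF := strongConvexOn_smoothing_add_cosineSeries hr hrbound k hknn hk1 ha ξ ψ hB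
  have hloss : mstar ≤ m + -(D / σ ^ 2 * ∑' j, |a j|) := by
    have := hσ₀ σ ((le_max_left _ _).trans hσ.le)
    rw [div_mul_eq_mul_div]
    linarith
  have key := strongConvexOn_univ_iff.mp (hF.mono hloss) v w t ht
  simp only [smoothing, ← integral_mul_inv_pow_smul_sub volume _ k hσ0,
    finrank_euclideanSpace_fin] at key
  exact key

/-- Deterministic cosine disturbance: Let `f = r + g` where `r` is
`m`-strongly convex and polynomially bounded, and
`g(x) = Σ_j a_j cos(⟪ξ_j, x⟫ + ψ_j)` with `Σ_j |a_j| < ∞` and `‖ξ_j‖ ≥ ε > 0`. For every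
nonnegative Schwartz density `k` and every `m* < m`, the scaled relaxations of `f` are
`m*`-strongly convex for all sufficiently large scales `σ`. -/
theorem deterministic_cosine_disturbance (n : ℕ)
    (r : EuclideanSpace ℝ (Fin n) → ℝ)
    (m : ℝ) (hm : 0 < m)
    (hconv : ∀ v w : EuclideanSpace ℝ (Fin n), ∀ t ∈ Set.Icc (0 : ℝ) 1,
      r (t • v + (1 - t) • w)
        ≤ t * r v + (1 - t) * r w - 1 / 2 * m * t * (1 - t) * ‖v - w‖ ^ 2)
    (C : ℝ) (hC : 0 ≤ C) (p : ℕ) (hrbound : ∀ x, |r x| ≤ C * (1 + ‖x‖) ^ p)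
    (a : ℕ → ℝ) (ha : Summable fun j => |a j|)
    (ξ : ℕ → EuclideanSpace ℝ (Fin n)) (ψ : ℕ → ℝ)
    (ε : ℝ) (hε : 0 < ε) (hξ : ∀ j, ε ≤ ‖ξ j‖)
    (k : SchwartzMap (EuclideanSpace ℝ (Fin n)) ℝ)
    (hknn : ∀ x, 0 ≤ k x) (hk1 : ∫ x, k x = 1)
    (mstar : ℝ) (hmstar : mstar < m) :
    ∃ σstar > (0 : ℝ), ∀ σ > σstar,
      ∀ v w : EuclideanSpace ℝ (Fin n), ∀ t ∈ Set.Icc (0 : ℝ) 1,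
        (∫ x, (r x + ∑' j, a j * Real.cos (⟪ξ j, x⟫ + ψ j)) *
            ((σ ^ n)⁻¹ * k (σ⁻¹ • (x - (t • v + (1 - t) • w)))))
          ≤ t * (∫ x, (r x + ∑' j, a j * Real.cos (⟪ξ j, x⟫ + ψ j)) *
                ((σ ^ n)⁻¹ * k (σ⁻¹ • (x - v))))
            + (1 - t) * (∫ x, (r x + ∑' j, a j * Real.cos (⟪ξ j, x⟫ + ψ j)) *
                ((σ ^ n)⁻¹ * k (σ⁻¹ • (x - w))))
            - 1 / 2 * mstar * t * (1 - t) * ‖v - w‖ ^ 2 :=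
  deterministic_cosine_disturbance_general n r m hconv C p hrbound a ha ξ ψ k hknn hk1 mstar hmstar
end
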